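/- arXiv:2106.10316 — 8 statements merged into one kernel-verified Lean document; each statement's English description precedes it below -/
import Mathlib

section
/- If V is a set of functions closed under Bellman updates (i.e., v ∈ V implies T_π v ∈ V for all π ∈ Π), and k divides K, then every model that is order-k value equivalent to the environment with respect to Π and V is also order-K value equivalent: M^k(Π, V) ⊆ M^K(Π, V). -/
open Finset Function

/-- A model/environment: expected rewards and transition kernel over finite
state and action spaces. -/
structure MDP (S A : Type*) where
  r : S → A → ℝ
  p : S → A → S → ℝ

/-- A (stochastic) policy: a map from states to weights over actions. -/
abbrev Policy (S A : Type*) := S → A → ℝ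

/-- The Bellman operator induced by a model `m` and policy `π` with discount `γ`. -/
noncomputable def bellman {S A : Type*} [Fintype S] [Fintype A]
    (m : MDP S A) (γ : ℝ) (π : Policy S A) (v : S → ℝ) : S → ℝ :=
  fun s => ∑ a, π s a * (m.r s a + γ * ∑ s', m.p s a s' * v s')

/-- `π` is a genuine stochastic policy. -/
def IsPolicy {S A : Type*} [Fintype A] (π : Policy S A) : Prop :=
  (∀ s a, 0 ≤ π s a) ∧ ∀ s, ∑ a, π s a = 1

/-- `m` has genuine probability transitions. -/
def IsStochMDP {S A : Type*} [Fintype S] (m : MDP S A) : Prop :=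
  (∀ s a s', 0 ≤ m.p s a s') ∧ ∀ s a, ∑ s', m.p s a s' = 1

/-- The deterministic policy induced by a map `d : S → A`. -/
def det {S A : Type*} [DecidableEq A] (d : S → A) : Policy S A :=
  fun s a => if a = d s then 1 else 0

/-- If V is closed under environment Bellman updates and k ∣ K, then any model
order-k value equivalent to the environment w.r.t. (Ps, V) is also order-K VE. -/
theorem order_k_VE_subset_order_K_VE {S A : Type*} [Fintype S] [Fintype A]
    (env : MDP S A) (γ : ℝ) (hγ0 : 0 ≤ γ) (hγ1 : γ < 1)
    (Ps : Set (Policy S A)) (V : Set (S → ℝ))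
    (hV : ∀ v ∈ V, ∀ π ∈ Ps, bellman env γ π v ∈ V)
    (k K : ℕ) (hk : 0 < k) (hdvd : k ∣ K)
    (m : MDP S A)
    (hm : ∀ π ∈ Ps, ∀ v ∈ V, (bellman m γ π)^[k] v = (bellman env γ π)^[k] v) :
    ∀ π ∈ Ps, ∀ v ∈ V, (bellman m γ π)^[K] v = (bellman env γ π)^[K] v := by
  intro π hπ v hv
  obtain ⟨n, rfl⟩ := hdvd
  have hmem : ∀ j, ∀ w ∈ V, (bellman env γ π)^[j] w ∈ V := by
    intro j
    induction j with
    | zero => exact fun w hw => hw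
    | succ j ih =>
      intro w hw
      rw [Function.iterate_succ_apply]
      exact ih _ (hV w hw π hπ)
  have main : ∀ n : ℕ, ∀ w ∈ V,
      (bellman m γ π)^[k * n] w = (bellman env γ π)^[k * n] w := by
    intro n
    induction n with
    | zero => simp
    | succ n ih =>
      intro w hw
      have h1 : k * (n + 1) = k * n + k := by ring
      rw [h1, Function.iterate_add_apply, Function.iterate_add_apply,
        hm π hπ w hw, ih _ (hmem k w hw)]
  exact main n v hv
end

section
/- For a single policy π and any positive integers i, j, the order-i and order-j value equivalence classes with respect to ({π}, {v_π}) are equal: M^i({π}, {v_π}) = M^j({π}, {v_π}), and both equal M^∞({π}). -/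
open Finset Function

lemma fixed_unique {X : Type*} [PseudoMetricSpace X] {f : X → X} {K : NNReal}
    (hf : LipschitzWith K f) (hK : (K:ℝ) < 1) {x y : X}
    (hx : f x = x) (hy : f y = y) : dist x y = 0 := by
  have h := hf.dist_le_mul x y
  rw [hx, hy] at h
  nlinarith [dist_nonneg (x := x) (y := y)]

lemma key {S A : Type*} [Fintype S] [Fintype A]
    (γ : NNReal) (hγ : γ < 1) (π : Policy S A) (n : ℕ) (hn : 0 < n)
    (vπ : S → ℝ) (m : MDP S A)
    (hmLip : LipschitzWith γ (bellman m (γ : ℝ) π))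
    (vmod : S → ℝ) (hmfix : bellman m (γ : ℝ) π vmod = vmod) :
    (bellman m (γ : ℝ) π)^[n] vπ = vπ ↔ vmod = vπ := by
  constructor
  · intro h
    have hlip : LipschitzWith (γ ^ n) ((bellman m (γ : ℝ) π)^[n]) := hmLip.iterate n
    have hK : ((γ ^ n : NNReal) : ℝ) < 1 := by
      push_cast
      calc (γ:ℝ) ^ n ≤ (γ:ℝ) ^ 1 :=
        pow_le_pow_of_le_one γ.coe_nonneg (le_of_lt (by exact_mod_cast hγ)) hn
      _ = γ := pow_one _
      _ < 1 := by exact_mod_cast hγ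
    have hmod : (bellman m (γ : ℝ) π)^[n] vmod = vmod := Function.iterate_fixed hmfix n
    have := fixed_unique hlip hK hmod h
    exact eq_of_dist_eq_zero this
  · intro h
    subst h
    exact Function.iterate_fixed hmfix n

/-- For a single policy π and positive i, j: M^i({π},{v_π}) = M^j({π},{v_π}),
and both equal M^∞({π}). -/
theorem order_i_eq_order_j_VE_on_value_function {S A : Type*} [Fintype S] [Fintype A]
    (env : MDP S A) (γ : NNReal) (hγ : γ < 1)
    (π : Policy S A) (i j : ℕ) (hi : 0 < i) (hj : 0 < j)
    (vπ : S → ℝ) (hfix : bellman env (γ : ℝ) π vπ = vπ)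
    (m : MDP S A)
    (hmLip : LipschitzWith γ (bellman m (γ : ℝ) π))
    (vmod : S → ℝ) (hmfix : bellman m (γ : ℝ) π vmod = vmod) :
    (((bellman m (γ : ℝ) π)^[i] vπ = (bellman env (γ : ℝ) π)^[i] vπ) ↔
      ((bellman m (γ : ℝ) π)^[j] vπ = (bellman env (γ : ℝ) π)^[j] vπ))
    ∧ (((bellman m (γ : ℝ) π)^[i] vπ = (bellman env (γ : ℝ) π)^[i] vπ) ↔ vmod = vπ) := by
  have henv : ∀ n, (bellman env (γ : ℝ) π)^[n] vπ = vπ := fun n => Function.iterate_fixed hfix n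
  rw [henv i, henv j]
  have Hi := key γ hγ π i hi vπ m hmLip vmod hmfix
  have Hj := key γ hγ π j hj vπ m hmLip vmod hmfix
  exact ⟨Hi.trans Hj.symm, Hi⟩
end

section
/- Any deterministic policy that is optimal for a model m̃ which is proper value equivalent to the environment with respect to all deterministic policies is also optimal in the environment. -/
open Finset Function

/-- Any deterministic policy optimal for a model which is PVE w.r.t. all
deterministic policies is also optimal in the environment (which admits a
deterministic optimal policy). -/
theorem optimal_in_det_PVE_model_optimal_in_env {S A : Type*} [Fintype S] [Fintype A]
    [DecidableEq A]
    (γ : ℝ) (hγ0 : 0 ≤ γ) (hγ1 : γ < 1)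
    (vVal : MDP S A → Policy S A → S → ℝ)
    (hval : ∀ (m : MDP S A) (π : Policy S A), bellman m γ π (vVal m π) = vVal m π)
    (env mdl : MDP S A)
    (envOptDet : ∃ d : S → A, ∀ (π : Policy S A) (s : S), vVal env π s ≤ vVal env (det d) s)
    (hpve : ∀ d : S → A, vVal mdl (det d) = vVal env (det d))
    (dstar : S → A)
    (hopt : ∀ (π : Policy S A) (s : S), vVal mdl π s ≤ vVal mdl (det dstar) s) :
    ∀ (π : Policy S A) (s : S), vVal env π s ≤ vVal env (det dstar) s := by
  obtain ⟨d, hd⟩ := envOptDet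
  intro π s
  calc vVal env π s ≤ vVal env (det d) s := hd π s
    _ = vVal mdl (det d) s := by rw [hpve]
    _ ≤ vVal mdl (det dstar) s := hopt _ s
    _ = vVal env (det dstar) s := by rw [hpve]
end

section
/- There exists an environment and a model with the same state and action spaces such that the model has the same value function as the environment for every deterministic policy, but there exists a stochastic policy whose value function differs between the model and the environment; hence M^∞(Π̄) can be a strict subset of M^∞(Π̄_det). -/
open Finset Function

/-- There exist an environment and a model with the same finite state/action
spaces, agreeing in value on every deterministic policy but differing on some
stochastic policy: M^∞(Π̄) can be a strict subset of M^∞(Π̄_det). -/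
theorem exists_det_PVE_not_stochastic_PVE :
    ∃ (nS nA : ℕ) (γ : ℝ), 0 < γ ∧ γ < 1 ∧
      ∃ env mdl : MDP (Fin nS) (Fin nA),
        IsStochMDP env ∧ IsStochMDP mdl ∧
        ∃ vE vM : Policy (Fin nS) (Fin nA) → (Fin nS → ℝ),
          (∀ π, IsPolicy π → bellman env γ π (vE π) = vE π) ∧
          (∀ π, IsPolicy π → bellman mdl γ π (vM π) = vM π) ∧
          (∀ d : Fin nS → Fin nA, vM (det d) = vE (det d)) ∧
          ∃ π, IsPolicy π ∧ vM π ≠ vE π := by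
  refine ⟨2, 2, 1/2, by norm_num, by norm_num,
    ⟨fun s a => if s = 0 ∧ a = 0 then 1 else 0,
     fun s a s' => if s = 0 ∧ a = 1 then (if s' = 0 then 1 else 0) else (if s' = 1 then 1 else 0)⟩,
    ⟨fun s a => if s = 0 ∧ a = 0 then 1 else 0,
     fun _ _ s' => if s' = 1 then 1 else 0⟩,
    ⟨fun s a s' => by dsimp; split <;> split <;> norm_num,
     fun s a => by dsimp; split <;> simp [Fin.sum_univ_two]⟩,
    ⟨fun s a s' => by dsimp; split <;> norm_num,
     fun s a => by simp [Fin.sum_univ_two]⟩,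
    fun π => fun s => if s = 0 then (π 0 0) / (1 - (1 - π 0 0) / 2) else 0,
    fun π => fun s => if s = 0 then π 0 0 else 0,
    ?_, ?_, ?_, ?_⟩
  · rintro π ⟨hpos, hsum⟩
    have h01 : π 0 0 + π 0 1 = 1 := by simpa [Fin.sum_univ_two] using hsum 0
    have hle : π 0 0 ≤ 1 := by nlinarith [hpos 0 1]
    have hden : 1 - (1 - π 0 0) / 2 > 0 := by linarith [hpos 0 0]
    have hne : (1:ℝ) + π 0 0 ≠ 0 := by linarith [hpos 0 0]
    funext s
    fin_cases s
    · simp only [bellman, Fin.sum_univ_two]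
      have key : (π 0 0 / (1 - (1 - π 0 0)/2)) * (1 - (1 - π 0 0)/2) = π 0 0 :=
        div_mul_cancel₀ _ hden.ne'
      norm_num
      linear_combination -key + (π 0 0 / (1 - (1 - π 0 0)/2) / 2) * h01
    · simp [bellman, Fin.sum_univ_two]
  · rintro π ⟨hpos, hsum⟩
    have h01 : π 0 0 + π 0 1 = 1 := by simpa [Fin.sum_univ_two] using hsum 0
    funext s
    fin_cases s
    · simp only [bellman, Fin.sum_univ_two]
      norm_num
    · simp [bellman, Fin.sum_univ_two]
  · intro d
    funext s
    fin_cases s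
    · have : d 0 = 0 ∨ d 0 = 1 := by omega
      rcases this with h | h <;> simp [det, h] <;> norm_num
    · simp
  · refine ⟨fun _ _ => 1/2, ⟨fun s a => by norm_num, fun s => by simp [Fin.sum_univ_two]⟩, ?_⟩
    intro h
    have := congrFun h 0
    norm_num at this
end

section
/- Suppose the environment's state space factors as S = X × Y with |Y| > 1, the reward satisfies r((x,y),a) = r(x,a), and the transition kernel satisfies p((x',y') | (x,y), a) = p_X(x' | x, a) · q(y' | x', x, y, a) for marginal p_X depending only on x. Then for each y₀ ∈ Y, the model m_{y₀} with the same rewards and transitions p̃((x',y')|(x,y),a) = 1{y' = y₀} p_X(x'|x,a) is proper value equivalent to the environment with respect to all policies π whose action distribution depends only on x; in particular v^{m_{y₀}}_π = v^{env}_π for all such π. -/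
open Finset Function

/-- Factored state space S = X × Y with |Y| > 1, x-only rewards and factored
transitions: the model that redirects the irrelevant component to a fixed y₀
is proper value equivalent w.r.t. every policy that depends only on x. -/
theorem irrelevant_factor_model_is_PVE {X Y A : Type*}
    [Fintype X] [Fintype Y] [Fintype A] [DecidableEq Y]
    (hY : 1 < Fintype.card Y)
    (γ : NNReal) (hγ : γ < 1)
    (env : MDP (X × Y) A)
    (rX : X → A → ℝ) (hr : ∀ x y a, env.r (x, y) a = rX x a)
    (pX : X → A → X → ℝ) (q : X → Y → A → X → Y → ℝ)
    (hp : ∀ x y a x' y', env.p (x, y) a (x', y') = pX x a x' * q x y a x' y')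
    (hq : ∀ x y a x', ∑ y', q x y a x' y' = 1)
    (y0 : Y) (mdl : MDP (X × Y) A)
    (hmr : ∀ s a, mdl.r s a = env.r s a)
    (hmp : ∀ x y a x' y',
      mdl.p (x, y) a (x', y') = (if y' = y0 then (1 : ℝ) else 0) * pX x a x')
    (π : Policy (X × Y) A)
    (hπ : ∀ x y y' a, π (x, y) a = π (x, y') a)
    (hLipE : LipschitzWith γ (bellman env (γ : ℝ) π))
    (hLipM : LipschitzWith γ (bellman mdl (γ : ℝ) π))
    (vE vM : X × Y → ℝ)
    (hvE : bellman env (γ : ℝ) π vE = vE)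
    (hvM : bellman mdl (γ : ℝ) π vM = vM) :
    vM = vE := by
  -- inner sum for the model
  have hinner : ∀ x y a, (∑ s', mdl.p (x, y) a s' * vM s') =
      ∑ x', pX x a x' * vM (x', y0) := by
    intro x y a
    rw [Fintype.sum_prod_type]
    refine Finset.sum_congr rfl fun x' _ => ?_
    rw [Finset.sum_eq_single y0]
    · simp [hmp]
    · intro b _ hb; simp [hmp, hb]
    · simp
  -- vM depends only on x
  have hMx : ∀ x y y', vM (x, y) = vM (x, y') := by
    intro x y y'
    have h1 := congrFun hvM (x, y)
    have h2 := congrFun hvM (x, y')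
    rw [← h1, ← h2]
    unfold bellman
    refine Finset.sum_congr rfl fun a _ => ?_
    rw [hπ x y y', hinner, hinner, hmr, hmr, hr, hr]
  -- vM is a fixed point of the env Bellman operator
  have hfix : bellman env (γ : ℝ) π vM = vM := by
    funext s
    obtain ⟨x, y⟩ := s
    have h1 := congrFun hvM (x, y)
    rw [← h1]
    unfold bellman
    refine Finset.sum_congr rfl fun a _ => ?_
    rw [hmr, hr]
    have key : (∑ s' : X × Y, env.p (x, y) a s' * vM s')
        = ∑ s' : X × Y, mdl.p (x, y) a s' * vM s' := by
      rw [hinner, Fintype.sum_prod_type]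
      refine Finset.sum_congr rfl fun x' _ => ?_
      have : (∑ y', env.p (x, y) a (x', y') * vM (x', y')) =
          ∑ y', pX x a x' * vM (x', y0) * q x y a x' y' := by
        refine Finset.sum_congr rfl fun y' _ => ?_
        rw [hp, hMx x' y' y0]; ring
      rw [this, ← Finset.mul_sum, hq, mul_one]
    rw [key]
  have hC : ContractingWith γ (bellman env (γ : ℝ) π) := ⟨hγ, hLipE⟩
  have h1 := hC.fixedPoint_unique (x := vM) hfix
  have h2 := hC.fixedPoint_unique (x := vE) hvE
  rw [h1, h2]
end

section
/- Let m be the n-state single-action 'ring' MDP with deterministic cyclic transitions s_i → s_{i+1} (indices mod n) and rewards r(s_i) = g(i), and let m̃ be the 'false-ring' MDP on the same states where each state self-transitions with reward r̃(s_i) = R_n(s_i)/(Σ_{t=0}^{n-1} γ^t), where R_n(s_i) is the discounted n-step return from s_i in the ring. Then for every function v : S → ℝ, T̃^n v = T^n v; i.e., the false-ring is order-n value equivalent to the ring with respect to all functions. -/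
/-!
Both MDPs are deterministic, so `n` Bellman backups from `s` collect the discounted rewards
along the orbit of `s` and then read `v` at the state reached after `n` steps. On the ring
that orbit visits `s, s + 1, …, s + (n - 1)` and returns to `s`, giving `R s + γ ^ n * v s`;
on the false ring it stays at `s`, and the `n` copies of the normalised reward add up to
`(∑ t < n, γ ^ t) * (R s / ∑ t < n, γ ^ t) = R s`. The normalising sum is positive since
`γ ≥ 0`.
-/

open Function Finset

theorem iterate_deterministic_bellman_apply {S : Type*} (σ : S → S) (r : S → ℝ) (γ : ℝ)
    (T : (S → ℝ) → S → ℝ) (hT : ∀ v s, T v s = r s + γ * v (σ s))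
    (k : ℕ) (v : S → ℝ) (s : S) :
    T^[k] v s = ∑ t ∈ range k, γ ^ t * r (σ^[t] s) + γ ^ k * v (σ^[k] s) := by
  induction k generalizing v with
  | zero => simp
  | succ k ih =>
    rw [iterate_succ_apply, ih, hT, sum_range_succ, ← iterate_succ_apply' σ, pow_succ]
    ring

theorem geom_sum_range_pos {γ : ℝ} (hγ : 0 ≤ γ) {n : ℕ} (hn : n ≠ 0) :
    0 < ∑ t ∈ range n, γ ^ t :=
  sum_pos' (fun t _ => pow_nonneg hγ t) ⟨0, mem_range.2 (Nat.pos_of_ne_zero hn), by simp⟩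

theorem add_one_iterate_apply {M : Type*} [AddMonoidWithOne M] (t : ℕ) (s : M) :
    (· + 1)^[t] s = s + t := by
  rw [add_right_iterate_apply, nsmul_one]

open Fin.NatCast in
theorem false_ring_order_n_VE_general (n : ℕ) [NeZero n]
    (γ : ℝ) (h0 : 0 ≤ γ)
    (g : Fin n → ℝ)
    (T Tm : (Fin n → ℝ) → (Fin n → ℝ))
    (hT : ∀ (v : Fin n → ℝ) (s : Fin n), T v s = g s + γ * v (s + 1))
    (R : Fin n → ℝ)
    (hR : ∀ s : Fin n, R s = ∑ t ∈ Finset.range n, γ ^ t * g (s + (t : Fin n)))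
    (hTm : ∀ (v : Fin n → ℝ) (s : Fin n),
      Tm v s = R s / (∑ t ∈ Finset.range n, γ ^ t) + γ * v s) :
    ∀ v : Fin n → ℝ, Tm^[n] v = T^[n] v := by
  intro v
  funext s
  have ring_iterate := iterate_deterministic_bellman_apply (· + 1) g γ T hT n v s
  have false_ring_iterate := iterate_deterministic_bellman_apply id
    (fun s => R s / ∑ t ∈ range n, γ ^ t) γ Tm hTm n v s
  simp only [add_one_iterate_apply, Fin.natCast_self, add_zero, ← hR] at ring_iterate
  simp only [iterate_id, id, ← sum_mul] at false_ring_iterate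
  rw [ring_iterate, false_ring_iterate,
    mul_div_cancel₀ _ (geom_sum_range_pos h0 (NeZero.ne n)).ne']

open Fin.NatCast in
/-- The false-ring MDP is order-n value equivalent to the n-state ring MDP with
respect to all functions: T̃^n v = T^n v for every v. Here T is the ring's
Bellman operator (cyclic transitions, reward g), T̃ the false-ring's
(self-loops, reward R_n(s) / Σ_{t<n} γ^t where R_n is the discounted n-step
return of the ring). -/
theorem false_ring_order_n_VE (n : ℕ) [NeZero n]
    (γ : ℝ) (h0 : 0 ≤ γ) (h1 : γ < 1)
    (g : Fin n → ℝ)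
    (T Tm : (Fin n → ℝ) → (Fin n → ℝ))
    (hT : ∀ (v : Fin n → ℝ) (s : Fin n), T v s = g s + γ * v (s + 1))
    (R : Fin n → ℝ)
    (hR : ∀ s : Fin n, R s = ∑ t ∈ Finset.range n, γ ^ t * g (s + (t : Fin n)))
    (hTm : ∀ (v : Fin n → ℝ) (s : Fin n),
      Tm v s = R s / (∑ t ∈ Finset.range n, γ ^ t) + γ * v s) :
    ∀ v : Fin n → ℝ, Tm^[n] v = T^[n] v :=
  false_ring_order_n_VE_general n γ h0 g T Tm hT R hR hTm
end

section
/- For the K-state ring MDP with rewards g(i) = 1 if i ∈ {1,…,k} and 0 otherwise (k < K), and its corresponding false-ring MDP, for any γ ∈ (0,1) and any constant function f, the k-step Bellman updates differ at state s_1: T^k f(s_1) ≠ T̃^k f(s_1). Consequently the false-ring is not order-k value equivalent to the ring despite being order-K value equivalent. -/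
open Function Fin.NatCast

/-!
Both operators are affine in `v` with the same linear part on constants, `v ↦ γ v`, so
`T^k c (s₁)` and `T̃^k c (s₁)` differ exactly in their reward terms. The ring collects
`A = ∑_{t<k} γ^t`, while the false ring collects `r̃(s₁) · A = (A / S) · A` with
`S = ∑_{t<K} γ^t`, since `R_K(s₁) = A` as well. As `0 < A < S`, `(A / S) · A < A`.
-/

section BellmanIterates

variable {ι M : Type*} [CommSemiring M] {γ : M}

theorem iterate_ring_apply [AddMonoidWithOne ι] {g : ι → M} {T : (ι → M) → ι → M}
    (hT : ∀ v s, T v s = g s + γ * v (s + 1)) (n : ℕ) (v : ι → M) (s : ι) :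
    T^[n] v s = ∑ t ∈ Finset.range n, γ ^ t * g (s + t) + γ ^ n * v (s + n) := by
  induction n generalizing v with
  | zero => simp
  | succ n ih =>
    rw [iterate_succ_apply, ih, hT, Finset.sum_range_succ, Nat.cast_succ, ← add_assoc]
    ring

theorem iterate_selfLoop_apply {r : ι → M} {T : (ι → M) → ι → M}
    (hT : ∀ v s, T v s = r s + γ * v s) (n : ℕ) (v : ι → M) (s : ι) :
    T^[n] v s = r s * ∑ t ∈ Finset.range n, γ ^ t + γ ^ n * v s := by
  induction n generalizing v with
  | zero => simp
  | succ n ih =>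
    rw [iterate_succ_apply, ih, hT, Finset.sum_range_succ]
    ring

end BellmanIterates

theorem sum_range_pow_mul_indicator_lt {k n K : ℕ} [NeZero K] {γ : ℝ} {g : Fin K → ℝ}
    (hg : ∀ i : Fin K, g i = if (i : ℕ) < k then 1 else 0) (hkn : k ≤ n) (hnK : n ≤ K) :
    ∑ t ∈ Finset.range n, γ ^ t * g t = ∑ t ∈ Finset.range k, γ ^ t := by
  have hval : ∀ t < n, ((t : Fin K) : ℕ) = t := fun t ht => Fin.val_cast_of_lt (ht.trans_le hnK)
  rw [← Finset.sum_range_add_sum_Ico _ hkn, Finset.sum_eq_zero (s := Finset.Ico k n) ?_, add_zero]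
  · refine Finset.sum_congr rfl fun t ht => ?_
    have htk := Finset.mem_range.mp ht
    rw [hg, hval t (htk.trans_le hkn), if_pos htk, mul_one]
  · intro t ht
    obtain ⟨hkt, htn⟩ := Finset.mem_Ico.mp ht
    rw [hg, hval t htn, if_neg hkt.not_gt, mul_zero]

theorem sum_range_pow_lt_sum_range_pow {γ : ℝ} (hγ : 0 < γ) {k K : ℕ} (hkK : k < K) :
    ∑ t ∈ Finset.range k, γ ^ t < ∑ t ∈ Finset.range K, γ ^ t :=
  Finset.sum_lt_sum_of_subset (Finset.range_subset_range.2 hkK.le) (Finset.mem_range.2 hkK)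
    (by simp) (pow_pos hγ k) fun j _ _ => (pow_pos hγ j).le

theorem false_ring_not_order_k_VE_general (k K : ℕ) [NeZero K] (hk : 0 < k) (hkK : k < K)
    (γ : ℝ) (h0 : 0 < γ)
    (g : Fin K → ℝ) (hg : ∀ i : Fin K, g i = if (i : ℕ) < k then 1 else 0)
    (T Tm : (Fin K → ℝ) → (Fin K → ℝ))
    (hT : ∀ (v : Fin K → ℝ) (s : Fin K), T v s = g s + γ * v (s + 1))
    (R : Fin K → ℝ)
    (hR : ∀ s : Fin K, R s = ∑ t ∈ Finset.range K, γ ^ t * g (s + (t : Fin K)))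
    (hTm : ∀ (v : Fin K → ℝ) (s : Fin K),
      Tm v s = R s / (∑ t ∈ Finset.range K, γ ^ t) + γ * v s) :
    ∀ c : ℝ, T^[k] (fun _ => c) 0 ≠ Tm^[k] (fun _ => c) 0 := by
  intro c
  set A := ∑ t ∈ Finset.range k, γ ^ t
  set S := ∑ t ∈ Finset.range K, γ ^ t
  have hR0 : R 0 = A := by
    simpa only [hR, zero_add] using sum_range_pow_mul_indicator_lt hg hkK.le le_rfl
  have hring : T^[k] (fun _ => c) 0 = A + γ ^ k * c := by
    rw [iterate_ring_apply hT]
    simp only [zero_add]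
    rw [sum_range_pow_mul_indicator_lt hg le_rfl hkK.le]
  have hfalse : Tm^[k] (fun _ => c) 0 = A / S * A + γ ^ k * c := by
    rw [iterate_selfLoop_apply hTm, hR0]
  have hA : 0 < A := Finset.sum_pos (fun t _ => pow_pos h0 t) ⟨0, Finset.mem_range.2 hk⟩
  have hAS : A < S := sum_range_pow_lt_sum_range_pow h0 hkK
  have hlt : A / S * A < A := mul_lt_of_lt_one_left hA ((div_lt_one (hA.trans hAS)).2 hAS)
  rw [hring, hfalse]
  intro h
  linarith

/-- For the K-state ring with rewards g = 1 on the first k states (k < K) and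
its false-ring counterpart, for any γ ∈ (0,1) and any constant function, the
k-step Bellman updates differ at the initial state: T^k f (s₁) ≠ T̃^k f (s₁). -/
theorem false_ring_not_order_k_VE (k K : ℕ) [NeZero K] (hk : 0 < k) (hkK : k < K)
    (γ : ℝ) (h0 : 0 < γ) (h1 : γ < 1)
    (g : Fin K → ℝ) (hg : ∀ i : Fin K, g i = if (i : ℕ) < k then 1 else 0)
    (T Tm : (Fin K → ℝ) → (Fin K → ℝ))
    (hT : ∀ (v : Fin K → ℝ) (s : Fin K), T v s = g s + γ * v (s + 1))
    (R : Fin K → ℝ)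
    (hR : ∀ s : Fin K, R s = ∑ t ∈ Finset.range K, γ ^ t * g (s + (t : Fin K)))
    (hTm : ∀ (v : Fin K → ℝ) (s : Fin K),
      Tm v s = R s / (∑ t ∈ Finset.range K, γ ^ t) + γ * v s) :
    ∀ c : ℝ, T^[k] (fun _ => c) 0 ≠ Tm^[k] (fun _ => c) 0 :=
  false_ring_not_order_k_VE_general k K hk hkK γ h0 g hg T Tm hT R hR hTm
end

section
/- There exist environments (e.g., an appropriately chosen ring MDP with nonzero γ) for which the order-k VE class with respect to all policies and any function set containing a constant function is a strict subset of the order-K VE class, where k < K and k divides K: M^k(Π, V) ⊊ M^K(Π, V). -/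
open Finset Function

/-! The witness is a deterministic single-action ring on `Fin K` whose reward `g - γ • g ∘ σ`,
with `g = 1{s = 0}`, is shaped by the potential `g`, so it telescopes along trajectories:
`T^n v = g + γ^n • (v - g) ∘ σ^[n]`. The rings stepping by `1` and by `2` therefore have the same
`K`-step operator (both satisfy `σ^[K] = id`), while from state `-k` their `k`-step operators send
a constant function to values that differ through `g 0 ≠ g k`. The inclusion needs no witness:
since `V` is invariant under the true operator, agreement of `k`-th iterates on `V` propagates to
every multiple of `k`. -/

open Set

theorem Set.EqOn.iterate_mul {α : Type*} {f g : α → α} {s : Set α} {k : ℕ}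
    (hg : MapsTo g s s) (h : EqOn f^[k] g^[k] s) (q : ℕ) :
    EqOn f^[k * q] g^[k * q] s := by
  induction q with
  | zero => exact fun _ _ => rfl
  | succ q ih =>
    intro v hv
    rw [Nat.mul_succ, iterate_add_apply, iterate_add_apply, h hv, ih (hg.iterate k hv)]

section VEClass

variable {S A : Type*} [Fintype S] [Fintype A]

/-- The order-`n` value-equivalence class `M^n(Π, V)` of `env`. -/
def veClass (env : MDP S A) (γ : ℝ) (Ps : Set (Policy S A)) (V : Set (S → ℝ)) (n : ℕ) :
    Set (MDP S A) :=
  {m | ∀ π ∈ Ps, ∀ v ∈ V, (bellman m γ π)^[n] v = (bellman env γ π)^[n] v}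

theorem veClass_subset_of_dvd {env : MDP S A} {γ : ℝ} {Ps : Set (Policy S A)}
    {V : Set (S → ℝ)} (hV : ∀ π ∈ Ps, MapsTo (bellman env γ π) V V) {k K : ℕ} (hkK : k ∣ K) :
    veClass env γ Ps V k ⊆ veClass env γ Ps V K := by
  obtain ⟨q, rfl⟩ := hkK
  exact fun m hm π hπ => EqOn.iterate_mul (hV π hπ) (hm π hπ) q

end VEClass

section PotentialShaped

variable {S : Type*} [Fintype S] [DecidableEq S]

noncomputable def potentialShapedMDP (σ : S → S) (g : S → ℝ) (γ : ℝ) : MDP S (Fin 1) where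
  r s _ := g s - γ * g (σ s)
  p s _ s' := if s' = σ s then 1 else 0

theorem isStochMDP_potentialShapedMDP (σ : S → S) (g : S → ℝ) (γ : ℝ) :
    IsStochMDP (potentialShapedMDP σ g γ) :=
  ⟨fun _ _ _ => by unfold potentialShapedMDP; positivity, fun _ _ => by simp [potentialShapedMDP]⟩

variable {σ : S → S} {g : S → ℝ} {γ : ℝ} {π : Policy S (Fin 1)}

theorem bellman_potentialShapedMDP (hπ : IsPolicy π) (v : S → ℝ) (s : S) :
    bellman (potentialShapedMDP σ g γ) γ π v s = g s + γ * (v (σ s) - g (σ s)) := by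
  have hπ0 : π s 0 = 1 := by simpa using hπ.2 s
  simp only [bellman, potentialShapedMDP, Fin.sum_univ_one, hπ0, ite_mul, one_mul, zero_mul,
    Finset.sum_ite_eq', Finset.mem_univ, if_true]
  ring

theorem bellman_potentialShapedMDP_iterate (hπ : IsPolicy π) (n : ℕ) (v : S → ℝ) (s : S) :
    (bellman (potentialShapedMDP σ g γ) γ π)^[n] v s =
      g s + γ ^ n * (v (σ^[n] s) - g (σ^[n] s)) := by
  induction n generalizing s with
  | zero => simp
  | succ n ih =>
    rw [iterate_succ_apply', bellman_potentialShapedMDP hπ, ih, iterate_succ_apply]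
    ring

variable {σ₁ σ₂ : S → S} {π₁ π₂ : Policy S (Fin 1)} {n : ℕ}

theorem bellman_potentialShapedMDP_iterate_eq (hπ₁ : IsPolicy π₁) (hπ₂ : IsPolicy π₂)
    (hσ : σ₁^[n] = σ₂^[n]) :
    (bellman (potentialShapedMDP σ₁ g γ) γ π₁)^[n] =
      (bellman (potentialShapedMDP σ₂ g γ) γ π₂)^[n] := by
  ext v s
  rw [bellman_potentialShapedMDP_iterate hπ₁, bellman_potentialShapedMDP_iterate hπ₂, hσ]

theorem bellman_potentialShapedMDP_iterate_const_ne (hγ : γ ≠ 0) (hπ₁ : IsPolicy π₁)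
    (hπ₂ : IsPolicy π₂) {s : S} (hs : g (σ₁^[n] s) ≠ g (σ₂^[n] s)) (c : ℝ) :
    (bellman (potentialShapedMDP σ₁ g γ) γ π₁)^[n] (fun _ => c) ≠
      (bellman (potentialShapedMDP σ₂ g γ) γ π₂)^[n] (fun _ => c) := by
  intro h
  have hs' := congrFun h s
  rw [bellman_potentialShapedMDP_iterate hπ₁, bellman_potentialShapedMDP_iterate hπ₂] at hs'
  exact hs (by simpa [hγ] using hs')

end PotentialShaped

section Ring

open Fin.CommRing

noncomputable def ringMDP (n : ℕ) [NeZero n] (γ : ℝ) (t : Fin n) : MDP (Fin n) (Fin 1) :=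
  potentialShapedMDP (· + t) (fun s => if s = 0 then 1 else 0) γ

variable {n : ℕ} [NeZero n]

theorem Fin.add_right_iterate_self (t : Fin n) : (· + t)^[n] = id := by
  ext s
  simp [nsmul_eq_mul]

variable {γ : ℝ} {π₁ π₂ : Policy (Fin n) (Fin 1)}

theorem bellman_ringMDP_iterate_card (hπ₁ : IsPolicy π₁) (hπ₂ : IsPolicy π₂) (t₁ t₂ : Fin n) :
    (bellman (ringMDP n γ t₁) γ π₁)^[n] = (bellman (ringMDP n γ t₂) γ π₂)^[n] :=
  bellman_potentialShapedMDP_iterate_eq hπ₁ hπ₂ <| by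
    rw [Fin.add_right_iterate_self, Fin.add_right_iterate_self]

theorem bellman_ringMDP_one_two_iterate_const_ne (hγ : γ ≠ 0) (hπ₁ : IsPolicy π₁)
    (hπ₂ : IsPolicy π₂) {k : ℕ} (hk : 0 < k) (hkn : k < n) (c : ℝ) :
    (bellman (ringMDP n γ 1) γ π₁)^[k] (fun _ => c) ≠
      (bellman (ringMDP n γ 2) γ π₂)^[k] (fun _ => c) := by
  have hk0 : (k : Fin n) ≠ 0 := fun h =>
    hk.ne' (Nat.eq_zero_of_dvd_of_lt (Fin.natCast_eq_zero.mp h) hkn)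
  have h₁ : (· + (1 : Fin n))^[k] (-k) = 0 := by
    rw [add_right_iterate_apply, nsmul_one, neg_add_cancel]
  have h₂ : (· + (2 : Fin n))^[k] (-k) = k := by
    rw [add_right_iterate_apply, nsmul_eq_mul]; ring
  refine bellman_potentialShapedMDP_iterate_const_ne hγ hπ₁ hπ₂ (s := -(k : Fin n)) ?_ c
  simp [h₁, h₂, hk0]

end Ring

theorem exists_env_order_k_VE_strict_subset_general (γ : ℝ) (h0 : 0 < γ)
    (k K : ℕ) (hk : 0 < k) (hkK : k < K) (hdvd : k ∣ K) :
    ∃ (nS nA : ℕ) (env : MDP (Fin nS) (Fin nA)),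
      IsStochMDP env ∧
      ∀ (Ps : Set (Policy (Fin nS) (Fin nA))) (V : Set (Fin nS → ℝ)),
        Ps.Nonempty → (∀ π ∈ Ps, IsPolicy π) →
        (∃ c : ℝ, (fun _ => c) ∈ V) →
        (∀ v ∈ V, ∀ π ∈ Ps, bellman env γ π v ∈ V) →
        {m : MDP (Fin nS) (Fin nA) |
            ∀ π ∈ Ps, ∀ v ∈ V, (bellman m γ π)^[k] v = (bellman env γ π)^[k] v}
          ⊂ {m : MDP (Fin nS) (Fin nA) |
            ∀ π ∈ Ps, ∀ v ∈ V, (bellman m γ π)^[K] v = (bellman env γ π)^[K] v} := by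
  have : NeZero K := ⟨by omega⟩
  refine ⟨K, 1, ringMDP K γ 1, isStochMDP_potentialShapedMDP _ _ _, ?_⟩
  rintro Ps V ⟨π, hπ⟩ hPs ⟨c, hc⟩ hV
  change veClass _ γ Ps V k ⊂ veClass _ γ Ps V K
  refine ⟨veClass_subset_of_dvd (fun π hπ v hv => hV v hv π hπ) hdvd, fun hsub => ?_⟩
  have hK : ringMDP K γ 2 ∈ veClass (ringMDP K γ 1) γ Ps V K := fun π' hπ' _ _ => by
    rw [bellman_ringMDP_iterate_card (hPs π' hπ') (hPs π' hπ')]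
  exact bellman_ringMDP_one_two_iterate_const_ne h0.ne' (hPs π hπ) (hPs π hπ) hk hkK c
    (hsub hK π hπ _ hc).symm

/-- There exist environments for which, for nonempty sets of genuine policies Ps
and function sets V containing a constant function and closed under Bellman
updates, the order-k VE class is a strict subset of the order-K VE class
(0 < k < K, k ∣ K, γ ∈ (0,1)). -/
theorem exists_env_order_k_VE_strict_subset (γ : ℝ) (h0 : 0 < γ) (h1 : γ < 1)
    (k K : ℕ) (hk : 0 < k) (hkK : k < K) (hdvd : k ∣ K) :
    ∃ (nS nA : ℕ) (env : MDP (Fin nS) (Fin nA)),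
      IsStochMDP env ∧
      ∀ (Ps : Set (Policy (Fin nS) (Fin nA))) (V : Set (Fin nS → ℝ)),
        Ps.Nonempty → (∀ π ∈ Ps, IsPolicy π) →
        (∃ c : ℝ, (fun _ => c) ∈ V) →
        (∀ v ∈ V, ∀ π ∈ Ps, bellman env γ π v ∈ V) →
        {m : MDP (Fin nS) (Fin nA) |
            ∀ π ∈ Ps, ∀ v ∈ V, (bellman m γ π)^[k] v = (bellman env γ π)^[k] v}
          ⊂ {m : MDP (Fin nS) (Fin nA) |
            ∀ π ∈ Ps, ∀ v ∈ V, (bellman m γ π)^[K] v = (bellman env γ π)^[K] v} :=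
  exists_env_order_k_VE_strict_subset_general γ h0 k K hk hkK hdvd
end
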